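/- arXiv:2502.06047 — 3 statements merged into one kernel-verified Lean document; each statement's English description precedes it below -/
import Mathlib

section
/- Let Ω ⊆ ℝ³ be a bounded open set, M > 0, and let Fₙ : ℝ³ → ℝ³ (n ∈ ℕ) be continuously differentiable functions with Fₙ(x) ≠ 0 and ‖Fₙ(x)‖ ≤ M for every x ∈ Ω. Define dₙ(x) := ‖Fₙ(x)‖ and Gₙ(x) := Fₙ(x)/‖Fₙ(x)‖ (so each dₙ is continuously differentiable on Ω). Suppose Fₙ(x) → F(x) for Lebesgue-almost every x ∈ Ω for some measurable F : ℝ³ → ℝ³ with F(x) ≠ 0 for almost every x ∈ Ω, and suppose ∫_Ω ‖∇dₙ(x) − Gₙ(x)‖² dx → 0 as n → ∞. Then, with d(x) := ‖F(x)‖ and G(x) := F(x)/‖F(x)‖: (i) dₙ → d and Gₙ → G Lebesgue-almost everywhere on Ω; (ii) ∫_Ω (dₙ − d)² dx → 0; (iii) ∫_Ω ‖∇dₙ − G‖² dx → 0; (iv) ‖G(x)‖ = 1 for almost every x ∈ Ω; and (v) for every infinitely differentiable φ : ℝ³ → ℝ with compact support contained in Ω, ∫_Ω G φ dx = −∫_Ω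 d ∇φ dx, i.e., G is the weak gradient of d on Ω. Hence dₙ converges to d in the H¹(Ω) norm. -/
open MeasureTheory Filter Topology

set_option maxHeartbeats 1000000

local notation "E3" => EuclideanSpace ℝ (Fin 3)

lemma grad_inner (f : E3 → ℝ) (x v : E3) :
    inner (𝕜 := ℝ) (gradient f x) v = fderiv ℝ f x v := by
  unfold gradient
  exact InnerProductSpace.toDual_symm_apply

lemma grad_apply (f : E3 → ℝ) (x : E3) (i : Fin 3) :
    gradient f x i = fderiv ℝ f x (EuclideanSpace.single i 1) := by
  have h := EuclideanSpace.inner_single_right (𝕜 := ℝ) i 1 (gradient f x)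
  rw [← grad_inner f x (EuclideanSpace.single i 1), h]
  simp

lemma norm_grad (f : E3 → ℝ) (x : E3) : ‖gradient f x‖ = ‖fderiv ℝ f x‖ := by
  unfold gradient
  exact LinearIsometryEquiv.norm_map _ _

lemma meas_grad (f : E3 → ℝ) : Measurable (fun x => gradient f x) := by
  exact ((InnerProductSpace.toDual ℝ E3).symm.continuous.measurable).comp
    (measurable_fderiv ℝ f)

lemma sq_tri (u v w : E3) : ‖u - w‖^2 ≤ 2*‖u - v‖^2 + 2*‖v - w‖^2 := by
  have h : ‖u - w‖ ≤ ‖u - v‖ + ‖v - w‖ := norm_sub_le_norm_sub_add_norm_sub u v w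
  nlinarith [norm_nonneg (u - v), norm_nonneg (v - w), norm_nonneg (u - w), sq_nonneg (‖u-v‖ - ‖v-w‖), sq_nonneg (‖u-v‖ + ‖v-w‖), mul_self_nonneg (‖u-v‖+‖v-w‖-‖u-w‖)]

lemma l2_to_l1 {α : Type*} [MeasurableSpace α] (μ : Measure α) [IsFiniteMeasure μ]
    (g : ℕ → α → ℝ)
    (hnn : ∀ n, ∀ᵐ x ∂μ, 0 ≤ g n x)
    (hint : ∀ n, Integrable (fun x => (g n x)^2) μ)
    (hint1 : ∀ n, Integrable (g n) μ)
    (h2 : Tendsto (fun n => ∫ x, (g n x)^2 ∂μ) atTop (𝓝 0)) :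
    Tendsto (fun n => ∫ x, g n x ∂μ) atTop (𝓝 0) := by
  rw [NormedAddCommGroup.tendsto_nhds_zero]
  intro ε hε
  set T := (μ Set.univ).toReal with hT
  have hT0 : 0 ≤ T := ENNReal.toReal_nonneg
  set δ := ε / (2 * (T + 1)) with hδdef
  have hδ : 0 < δ := by positivity
  have h2' : ∀ᶠ n in atTop, ∫ x, (g n x)^2 ∂μ < δ * (ε/2) := by
    have := h2.eventually (eventually_lt_nhds (show (0:ℝ) < δ * (ε/2) by positivity))
    exact this
  filter_upwards [h2'] with n hn
  have hnn' : 0 ≤ ∫ x, g n x ∂μ := integral_nonneg_of_ae (hnn n)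
  rw [Real.norm_eq_abs, abs_of_nonneg hnn']
  have hpt : ∀ᵐ x ∂μ, g n x ≤ δ + δ⁻¹ * (g n x)^2 := by
    filter_upwards [hnn n] with x hx
    rw [← sub_nonneg]
    have key : δ * (δ + δ⁻¹ * (g n x)^2 - g n x) = δ^2 + (g n x)^2 - δ * g n x := by
      field_simp
    nlinarith [sq_nonneg (g n x - δ), hδ]
  have hIrhs : Integrable (fun x => δ + δ⁻¹ * (g n x)^2) μ :=
    (integrable_const δ).add ((hint n).const_mul δ⁻¹)
  have hle : ∫ x, g n x ∂μ ≤ ∫ x, (δ + δ⁻¹ * (g n x)^2) ∂μ :=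
    integral_mono_ae (hint1 n) hIrhs hpt
  have heq : ∫ x, (δ + δ⁻¹ * (g n x)^2) ∂μ = T * δ + δ⁻¹ * ∫ x, (g n x)^2 ∂μ := by
    rw [integral_add (integrable_const δ) ((hint n).const_mul δ⁻¹)]
    rw [integral_const, integral_const_mul]
    simp [smul_eq_mul]
    exact Or.inl rfl
  have hbound : T * δ + δ⁻¹ * ∫ x, (g n x)^2 ∂μ < ε := by
    have h1 : T * δ < ε / 2 := by
      rw [hδdef]
      rw [mul_div_assoc']
      rw [div_lt_div_iff₀ (by positivity) (by norm_num)]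
      nlinarith
    have h2 : δ⁻¹ * ∫ x, (g n x)^2 ∂μ < δ⁻¹ * (δ * (ε/2)) := by
      apply mul_lt_mul_of_pos_left hn (by positivity)
    rw [inv_mul_cancel_left₀ (ne_of_gt hδ)] at h2
    linarith
  linarith [heq ▸ hle]


lemma exists_cutoff {K Ω : Set E3} (hK : IsCompact K) (hΩo : IsOpen Ω) (hKΩ : K ⊆ Ω) :
    ∃ ψ : E3 → ℝ, ContDiff ℝ ((⊤:ℕ∞) : WithTop ℕ∞) ψ ∧ HasCompactSupport ψ ∧ tsupport ψ ⊆ Ω ∧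
      Set.EqOn ψ 1 K := by
  obtain ⟨K', hK', hKint, hK'Ω⟩ := exists_compact_between hK hΩo hKΩ
  obtain ⟨f, hf0, hf1, -⟩ := exists_contMDiffMap_zero_one_of_isClosed (n := (⊤ : ℕ∞)) (modelWithCornersSelf ℝ E3)
    (isOpen_interior.isClosed_compl) hK.isClosed
    (Set.disjoint_left.mpr (fun x hx hxK => hx (hKint hxK)))
  have hsupp : Function.support ⇑f ⊆ interior K' := by
    intro x hx
    by_contra hxc
    exact hx (hf0 hxc)
  have htsupp : tsupport ⇑f ⊆ K' := by
    apply closure_minimal (hsupp.trans interior_subset) hK'.isClosed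
  refine ⟨f, ?_, ?_, htsupp.trans hK'Ω, hf1⟩
  · exact (contMDiff_iff_contDiff.mp f.contMDiff)
  · exact HasCompactSupport.of_support_subset_isCompact hK' (hsupp.trans interior_subset)


lemma continuous_of_loc {Y : Type*} [NormedAddCommGroup Y] {g : E3 → Y}
    {U K : Set E3} (hU : IsOpen U) (hg : ContinuousOn g U) (hKc : IsClosed K)
    (hKU : K ⊆ U) (hzero : ∀ x ∉ K, g x = 0) : Continuous g := by
  rw [continuous_iff_continuousAt]
  intro x
  by_cases hx : x ∈ U
  · exact hg.continuousAt (hU.mem_nhds hx)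
  · have hxK : x ∉ K := fun h => hx (hKU h)
    have hev : (fun _ => (0 : Y)) =ᶠ[𝓝 x] g := by
      filter_upwards [hKc.isOpen_compl.mem_nhds hxK] with y hy
      exact (hzero y hy).symm
    exact continuousAt_const.congr hev

lemma ibp_core (Ω : Set E3) (hΩo : IsOpen Ω)
    (f : E3 → E3) (hC : ContDiff ℝ 1 f) (hne : ∀ x ∈ Ω, f x ≠ 0)
    (φ : E3 → ℝ) (hφ : ContDiff ℝ ((⊤:ℕ∞) : WithTop ℕ∞) φ)
    (hφc : HasCompactSupport φ) (hφs : tsupport φ ⊆ Ω)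
    (ψ : E3 → ℝ) (hψ : ContDiff ℝ ((⊤:ℕ∞) : WithTop ℕ∞) ψ)
    (hψc : HasCompactSupport ψ) (hψΩ : tsupport ψ ⊆ Ω)
    (hψ1 : Set.EqOn ψ 1 (tsupport φ)) :
    ∫ x in Ω, φ x • gradient (fun y => ‖f y‖) x
      = - ∫ x in Ω, ‖f x‖ • gradient φ x := by
  set dn : E3 → ℝ := fun y => ‖f y‖ with hdn
  have hfd : Differentiable ℝ f := hC.differentiable one_ne_zero
  have hdncont : Continuous dn := hfd.continuous.norm
  have hφcont : Continuous φ := hφ.continuous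
  have hψcont : Continuous ψ := hψ.continuous
  have hφdiff : Differentiable ℝ φ := hφ.differentiable (by simp : ((⊤:ℕ∞) : WithTop ℕ∞) ≠ 0)
  have hfderivφ : Continuous (fderiv ℝ φ) := hφ.continuous_fderiv (by simp : ((⊤:ℕ∞) : WithTop ℕ∞) ≠ 0)
  have hdΩ : ∀ x ∈ Ω, DifferentiableAt ℝ dn x := fun x hx =>
    ((hfd x).norm ℝ (hne x hx))
  -- ContDiffOn of dn on Ω and continuity of its fderiv there
  have hdnC : ∀ x ∈ Ω, ContDiffAt ℝ 1 dn x := fun x hx =>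
    (hC.contDiffAt).norm ℝ (hne x hx)
  have hfderivdn : ContinuousOn (fderiv ℝ dn) Ω := by
    apply ContDiffOn.continuousOn_fderiv_of_isOpen _ hΩo le_rfl
    exact fun x hx => (hdnC x hx).contDiffWithinAt
  -- the cut-off product
  set D : E3 → ℝ := fun x => ψ x * dn x with hD
  have hDcont : Continuous D := hψcont.mul hdncont
  have hDdiff : Differentiable ℝ D := by
    intro x
    by_cases hx : x ∈ Ω
    · exact ((hψ.differentiable (by simp : ((⊤:ℕ∞) : WithTop ℕ∞) ≠ 0)) x).mul (hdΩ x hx)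
    · have hxs : x ∉ tsupport ψ := fun h => hx (hψΩ h)
      have hev : D =ᶠ[𝓝 x] (fun _ => (0:ℝ)) := by
        filter_upwards [(isClosed_closure).isOpen_compl.mem_nhds hxs] with y hy
        have : ψ y = 0 := image_eq_zero_of_notMem_tsupport hy
        simp [hD, this]
      exact (hev.differentiableAt_iff).mpr (differentiableAt_const 0)
  have hDeq : ∀ x ∈ tsupport φ, D x = dn x := by
    intro x hx; simp [hD, hψ1 hx]
  have hfdD : ∀ x ∈ Function.support φ, fderiv ℝ D x = fderiv ℝ dn x := by
    intro x hx
    apply Filter.EventuallyEq.fderiv_eq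
    filter_upwards [(hφcont.isOpen_support).mem_nhds hx] with y hy
    exact hDeq y (subset_tsupport φ hy)
  -- vector integrand
  set Φ : E3 → E3 := fun x => φ x • gradient dn x with hΦ
  have hgradcontOn : ContinuousOn (fun x => gradient dn x) Ω := by
    have : ContinuousOn (fun x => (InnerProductSpace.toDual ℝ E3).symm (fderiv ℝ dn x)) Ω :=
      (InnerProductSpace.toDual ℝ E3).symm.continuous.comp_continuousOn hfderivdn
    exact this
  have hΦcont : Continuous Φ := by
    apply continuous_of_loc (U := Ω) (K := tsupport φ) hΩo _ (isClosed_closure) hφs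
    · intro x hx
      simp [hΦ, image_eq_zero_of_notMem_tsupport hx]
    · exact hφcont.continuousOn.smul hgradcontOn
  have hΦsupp : HasCompactSupport Φ := by
    apply HasCompactSupport.of_support_subset_isCompact hφc
    intro x hx
    by_contra hxc
    exact hx (by simp [hΦ, image_eq_zero_of_notMem_tsupport hxc])
  have hΦint : Integrable Φ volume := hΦcont.integrable_of_hasCompactSupport hΦsupp
  -- second integrand
  set Ψ : E3 → E3 := fun x => dn x • gradient φ x with hΨ
  have hgradφcont : Continuous (fun x => gradient φ x) :=
    (InnerProductSpace.toDual ℝ E3).symm.continuous.comp hfderivφ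
  have hgradφzero : ∀ x ∉ tsupport φ, gradient φ x = 0 := by
    intro x hx
    have : fderiv ℝ φ x = 0 := by
      by_contra h
      exact hx (support_fderiv_subset ℝ (Function.mem_support.mpr h))
    show (InnerProductSpace.toDual ℝ E3).symm (fderiv ℝ φ x) = 0
    simp [this]
  have hΨcont : Continuous Ψ := hdncont.smul hgradφcont
  have hΨsupp : HasCompactSupport Ψ := by
    apply HasCompactSupport.of_support_subset_isCompact hφc
    intro x hx
    by_contra hxc
    exact hx (by simp [hΨ, hgradφzero x hxc])
  have hΨint : Integrable Ψ volume := hΨcont.integrable_of_hasCompactSupport hΨsupp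
  -- reduce to whole-space integrals
  have hAeq : ∫ x in Ω, φ x • gradient dn x = ∫ x, Φ x := by
    apply setIntegral_eq_integral_of_forall_compl_eq_zero
    intro x hx
    have : x ∉ tsupport φ := fun h => hx (hφs h)
    simp [image_eq_zero_of_notMem_tsupport this]
  have hBeq : ∫ x in Ω, dn x • gradient φ x = ∫ x, Ψ x := by
    apply setIntegral_eq_integral_of_forall_compl_eq_zero
    intro x hx
    have : x ∉ tsupport φ := fun h => hx (hφs h)
    simp [hΨ, hgradφzero x this]
  rw [hAeq, hBeq]
  -- now prove coordinatewise
  have key : ∀ i : Fin 3, (∫ x, Φ x) i = (- ∫ x, Ψ x) i := by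
    intro i
    set ei : E3 := EuclideanSpace.single i 1 with hei
    have hprojΦ : (∫ x, Φ x) i = ∫ x, φ x * fderiv ℝ dn x ei := by
      have h1 := (EuclideanSpace.proj (𝕜 := ℝ) i).integral_comp_comm hΦint
      have h2 : (EuclideanSpace.proj (𝕜 := ℝ) i) (∫ x, Φ x) = (∫ x, Φ x) i := rfl
      rw [← h2, ← h1]
      congr 1
      funext x
      simp [hΦ, PiLp.smul_apply, smul_eq_mul, grad_apply, hei]
    have hprojΨ : (∫ x, Ψ x) i = ∫ x, dn x * fderiv ℝ φ x ei := by
      have h1 := (EuclideanSpace.proj (𝕜 := ℝ) i).integral_comp_comm hΨint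
      have h2 : (EuclideanSpace.proj (𝕜 := ℝ) i) (∫ x, Ψ x) = (∫ x, Ψ x) i := rfl
      rw [← h2, ← h1]
      congr 1
      funext x
      simp [hΨ, PiLp.smul_apply, smul_eq_mul, grad_apply, hei]
    -- replace fderiv dn by fderiv D under φ
    have hswap : (fun x => φ x * fderiv ℝ dn x ei) = (fun x => φ x * fderiv ℝ D x ei) := by
      funext x
      by_cases hx : φ x = 0
      · simp [hx]
      · rw [hfdD x (Function.mem_support.mpr hx)]
    -- integrability for IBP
    have hg1cont : Continuous (fun x => φ x * fderiv ℝ dn x ei) := by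
      apply continuous_of_loc (U := Ω) (K := tsupport φ) hΩo _ (isClosed_closure) hφs
      · intro x hx
        simp [image_eq_zero_of_notMem_tsupport hx]
      · exact hφcont.continuousOn.mul ((hfderivdn.clm_apply continuousOn_const))
    have hg1supp : HasCompactSupport (fun x => φ x * fderiv ℝ dn x ei) := by
      apply HasCompactSupport.of_support_subset_isCompact hφc
      intro x hx
      by_contra hxc
      exact hx (by simp [image_eq_zero_of_notMem_tsupport hxc])
    have hint2 : Integrable (fun x => φ x * fderiv ℝ D x ei) volume := by
      rw [← hswap]
      exact hg1cont.integrable_of_hasCompactSupport hg1supp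
    have hint1 : Integrable (fun x => fderiv ℝ φ x ei * D x) volume := by
      apply Continuous.integrable_of_hasCompactSupport
      · exact (hfderivφ.clm_apply continuous_const).mul hDcont
      · apply HasCompactSupport.of_support_subset_isCompact hφc
        intro x hx
        by_contra hxc
        have : fderiv ℝ φ x = 0 := by
          by_contra h
          exact hxc (support_fderiv_subset ℝ (Function.mem_support.mpr h))
        exact hx (by simp [this])
    have hint3 : Integrable (fun x => φ x * D x) volume := by
      apply Continuous.integrable_of_hasCompactSupport (hφcont.mul hDcont)
      exact hφc.mul_right
    have hibp := integral_mul_fderiv_eq_neg_fderiv_mul_of_integrable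
      hint1 hint2 hint3 (fun x _ => hφdiff x) (fun x _ => hDdiff x)
    -- convert RHS of ibp
    have hrhs : (fun x => fderiv ℝ φ x ei * D x) = (fun x => dn x * fderiv ℝ φ x ei) := by
      funext x
      by_cases hx : x ∈ tsupport φ
      · rw [hDeq x hx]; ring
      · have : fderiv ℝ φ x = 0 := by
          by_contra h
          exact hx (support_fderiv_subset ℝ (Function.mem_support.mpr h))
        simp [this]
    rw [PiLp.neg_apply, hprojΦ, hprojΨ, hswap, hibp, hrhs]
  have : (∫ x, Φ x) = (- ∫ x, Ψ x) := by
    ext i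
    exact key i
  exact this



/-- Theorem 1 of the paper — H¹(Ω) convergence of the magnitude of
the neural shortest path under vanishing gradient-matching loss. -/
theorem nsp_H1_convergence
    (Ω : Set (EuclideanSpace ℝ (Fin 3)))
    (hΩo : IsOpen Ω) (hΩb : Bornology.IsBounded Ω)
    (M : ℝ) (hM : 0 < M)
    (Fn : ℕ → EuclideanSpace ℝ (Fin 3) → EuclideanSpace ℝ (Fin 3))
    (hFnC : ∀ n, ContDiff ℝ 1 (Fn n))
    (hFnne : ∀ n, ∀ x ∈ Ω, Fn n x ≠ 0)
    (hFnbd : ∀ n, ∀ x ∈ Ω, ‖Fn n x‖ ≤ M)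
    (F : EuclideanSpace ℝ (Fin 3) → EuclideanSpace ℝ (Fin 3))
    (hFmeas : Measurable F)
    (hFne : ∀ᵐ x ∂(volume.restrict Ω), F x ≠ 0)
    (hconv : ∀ᵐ x ∂(volume.restrict Ω),
      Tendsto (fun n => Fn n x) atTop (𝓝 (F x)))
    (hGM : Tendsto
      (fun n => ∫ x in Ω,
        ‖gradient (fun y => ‖Fn n y‖) x - (‖Fn n x‖)⁻¹ • Fn n x‖ ^ 2)
      atTop (𝓝 0)) :
    -- (i) a.e. convergence of magnitudes and directions
    (∀ᵐ x ∂(volume.restrict Ω),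
      Tendsto (fun n => ‖Fn n x‖) atTop (𝓝 ‖F x‖) ∧
      Tendsto (fun n => (‖Fn n x‖)⁻¹ • Fn n x) atTop (𝓝 ((‖F x‖)⁻¹ • F x))) ∧
    -- (ii) L² convergence of the magnitudes
    Tendsto (fun n => ∫ x in Ω, (‖Fn n x‖ - ‖F x‖) ^ 2) atTop (𝓝 0) ∧
    -- (iii) L² convergence of the gradients of the magnitudes to G := F/‖F‖
    Tendsto
      (fun n => ∫ x in Ω,
        ‖gradient (fun y => ‖Fn n y‖) x - (‖F x‖)⁻¹ • F x‖ ^ 2)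
      atTop (𝓝 0) ∧
    -- (iv) the limit direction field has unit length a.e.
    (∀ᵐ x ∂(volume.restrict Ω), ‖(‖F x‖)⁻¹ • F x‖ = 1) ∧
    -- (v) G is the weak gradient of d := ‖F‖ on Ω
    (∀ φ : EuclideanSpace ℝ (Fin 3) → ℝ,
      ContDiff ℝ (⊤ : ℕ∞) φ → HasCompactSupport φ → tsupport φ ⊆ Ω →
        ∫ x in Ω, φ x • ((‖F x‖)⁻¹ • F x) = - ∫ x in Ω, ‖F x‖ • gradient φ x) := by
  have hΩm : MeasurableSet Ω := hΩo.measurableSet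
  set μ := volume.restrict Ω with hμ
  haveI : IsFiniteMeasure μ := by
    constructor
    rw [Measure.restrict_apply_univ]
    exact hΩb.measure_lt_top
  have hmem : ∀ᵐ x ∂μ, x ∈ Ω := ae_restrict_mem hΩm
  set G : E3 → E3 := fun x => (‖F x‖)⁻¹ • F x with hGdef
  set Gn : ℕ → E3 → E3 := fun n x => (‖Fn n x‖)⁻¹ • Fn n x with hGndef
  set dG : ℕ → E3 → E3 := fun n x => gradient (fun y => ‖Fn n y‖) x with hdGdef
  -- (i)
  have hi : ∀ᵐ x ∂μ,
      Tendsto (fun n => ‖Fn n x‖) atTop (𝓝 ‖F x‖) ∧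
      Tendsto (fun n => Gn n x) atTop (𝓝 (G x)) := by
    filter_upwards [hFne, hconv] with x hne0 hcv
    exact ⟨hcv.norm, ((hcv.norm.inv₀ (norm_ne_zero_iff.mpr hne0)).smul hcv)⟩
  -- boundedness of ‖F‖ a.e.
  have hFM : ∀ᵐ x ∂μ, ‖F x‖ ≤ M := by
    filter_upwards [hmem, hconv] with x hx hcv
    exact le_of_tendsto hcv.norm (Filter.Eventually.of_forall fun n => hFnbd n x hx)
  -- measurability
  have hFncont : ∀ n, Continuous (Fn n) := fun n => (hFnC n).continuous
  have hGnmeas : ∀ n, Measurable (Gn n) := fun n =>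
    (((hFncont n).norm.measurable).inv).smul (hFncont n).measurable
  have hGmeas : Measurable G := (hFmeas.norm.inv).smul hFmeas
  have hdGmeas : ∀ n, Measurable (dG n) := fun n => meas_grad _
  -- (ii)
  have hii : Tendsto (fun n => ∫ x in Ω, (‖Fn n x‖ - ‖F x‖) ^ 2) atTop (𝓝 0) := by
    have h := tendsto_integral_of_dominated_convergence (μ := μ)
      (F := fun n x => (‖Fn n x‖ - ‖F x‖) ^ 2) (f := fun _ => (0:ℝ))
      (bound := fun _ => (2*M)^2)
      (fun n => (((hFncont n).norm.measurable.sub hFmeas.norm).pow_const 2).aestronglyMeasurable)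
      (integrable_const _)
      (fun n => by
        filter_upwards [hmem, hFM] with x hx hFMx
        have h1 : |‖Fn n x‖ - ‖F x‖| ≤ 2*M := by
          rw [abs_le]
          constructor
          · have := hFnbd n x hx
            have := norm_nonneg (Fn n x)
            have := norm_nonneg (F x)
            linarith
          · have := norm_nonneg (F x)
            have := hFnbd n x hx
            linarith
        rw [Real.norm_eq_abs, abs_of_nonneg (sq_nonneg _), ← sq_abs]
        have : (0:ℝ) ≤ 2*M := by linarith
        nlinarith [abs_nonneg (‖Fn n x‖ - ‖F x‖)])
      (by
        filter_upwards [hi] with x ⟨h1, _⟩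
        have : Tendsto (fun n => ‖Fn n x‖ - ‖F x‖) atTop (𝓝 0) := by
          simpa using h1.sub (tendsto_const_nhds (x := ‖F x‖))
        simpa using this.pow 2)
    simpa using h
  -- gradient bound for each n
  have hCn : ∀ n, ∃ C : ℝ, 0 ≤ C ∧ ∀ x ∈ Ω, ‖dG n x‖ ≤ C := by
    intro n
    have hcont : Continuous (fun x => fderiv ℝ (Fn n) x) := (hFnC n).continuous_fderiv one_ne_zero
    obtain ⟨C, hC⟩ := (hΩb.isCompact_closure).exists_bound_of_continuousOn hcont.continuousOn
    refine ⟨max C 0, le_max_right _ _, ?_⟩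
    intro x hx
    have hdiffFn : DifferentiableAt ℝ (Fn n) x := (hFnC n).differentiable one_ne_zero x
    have hnd : DifferentiableAt ℝ (fun y : E3 => ‖y‖) (Fn n x) :=
      (contDiffAt_norm (𝕜 := ℝ) (n := 1) (hFnne n x hx)).differentiableAt one_ne_zero
    have hcomp : fderiv ℝ (fun y => ‖Fn n y‖) x
        = (fderiv ℝ (fun y : E3 => ‖y‖) (Fn n x)).comp (fderiv ℝ (Fn n) x) :=
      fderiv_comp x hnd hdiffFn
    have : ‖dG n x‖ = ‖fderiv ℝ (fun y => ‖Fn n y‖) x‖ := norm_grad _ _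
    rw [this, hcomp]
    calc ‖(fderiv ℝ (fun y : E3 => ‖y‖) (Fn n x)).comp (fderiv ℝ (Fn n) x)‖
        ≤ ‖fderiv ℝ (fun y : E3 => ‖y‖) (Fn n x)‖ * ‖fderiv ℝ (Fn n) x‖ :=
          ContinuousLinearMap.opNorm_comp_le _ _
      _ = 1 * ‖fderiv ℝ (Fn n) x‖ := by rw [norm_fderiv_norm hnd]
      _ = ‖fderiv ℝ (Fn n) x‖ := one_mul _
      _ ≤ C := hC x (subset_closure hx)
      _ ≤ max C 0 := le_max_left _ _
  have hGn1 : ∀ n, ∀ x ∈ Ω, ‖Gn n x‖ = 1 := by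
    intro n x hx
    have h0 : ‖Fn n x‖ ≠ 0 := norm_ne_zero_iff.mpr (hFnne n x hx)
    rw [hGndef]
    simp only [norm_smul, norm_inv, norm_norm]
    exact inv_mul_cancel₀ h0
  have hGle1 : ∀ x, ‖G x‖ ≤ 1 := by
    intro x
    by_cases h : F x = 0
    · simp [hGdef, h]
    · have h0 : ‖F x‖ ≠ 0 := norm_ne_zero_iff.mpr h
      rw [hGdef]
      simp only [norm_smul, norm_inv, norm_norm]
      rw [inv_mul_cancel₀ h0]
  -- integrability lemmas
  have hIb : ∀ n, Integrable (fun x => ‖dG n x - Gn n x‖^2) μ := by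
    intro n
    obtain ⟨C, hC0, hC⟩ := hCn n
    apply Integrable.mono' (integrable_const ((C+1)^2))
      (((hdGmeas n).sub (hGnmeas n)).norm.pow_const 2).aestronglyMeasurable
    filter_upwards [hmem] with x hx
    rw [Real.norm_eq_abs, abs_of_nonneg (sq_nonneg _)]
    have h1 : ‖dG n x - Gn n x‖ ≤ C + 1 := by
      calc ‖dG n x - Gn n x‖ ≤ ‖dG n x‖ + ‖Gn n x‖ := norm_sub_le _ _
        _ ≤ C + 1 := by rw [hGn1 n x hx] at *; linarith [hC x hx]
    show ‖dG n x - Gn n x‖ ^ 2 ≤ (C + 1) ^ 2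
    nlinarith [norm_nonneg (dG n x - Gn n x)]
  have hIc : ∀ n, Integrable (fun x => ‖Gn n x - G x‖^2) μ := by
    intro n
    apply Integrable.mono' (integrable_const 4)
      (((hGnmeas n).sub hGmeas).norm.pow_const 2).aestronglyMeasurable
    filter_upwards [hmem] with x hx
    rw [Real.norm_eq_abs, abs_of_nonneg (sq_nonneg _)]
    have h1 : ‖Gn n x - G x‖ ≤ 2 := by
      calc ‖Gn n x - G x‖ ≤ ‖Gn n x‖ + ‖G x‖ := norm_sub_le _ _
        _ ≤ 2 := by rw [hGn1 n x hx]; linarith [hGle1 x]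
    show ‖Gn n x - G x‖ ^ 2 ≤ 4
    nlinarith [norm_nonneg (Gn n x - G x)]
  have hIa : ∀ n, Integrable (fun x => ‖dG n x - G x‖^2) μ := by
    intro n
    obtain ⟨C, hC0, hC⟩ := hCn n
    apply Integrable.mono' (integrable_const ((C+1)^2))
      (((hdGmeas n).sub hGmeas).norm.pow_const 2).aestronglyMeasurable
    filter_upwards [hmem] with x hx
    rw [Real.norm_eq_abs, abs_of_nonneg (sq_nonneg _)]
    have h1 : ‖dG n x - G x‖ ≤ C + 1 := by
      calc ‖dG n x - G x‖ ≤ ‖dG n x‖ + ‖G x‖ := norm_sub_le _ _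
        _ ≤ C + 1 := by linarith [hC x hx, hGle1 x]
    show ‖dG n x - G x‖ ^ 2 ≤ (C + 1) ^ 2
    nlinarith [norm_nonneg (dG n x - G x)]
  -- c n → 0
  have hc : Tendsto (fun n => ∫ x in Ω, ‖Gn n x - G x‖^2) atTop (𝓝 0) := by
    have h := tendsto_integral_of_dominated_convergence (μ := μ)
      (F := fun n x => ‖Gn n x - G x‖^2) (f := fun _ => (0:ℝ))
      (bound := fun _ => 4)
      (fun n => (((hGnmeas n).sub hGmeas).norm.pow_const 2).aestronglyMeasurable)
      (integrable_const _)
      (fun n => by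
        filter_upwards [hmem] with x hx
        rw [Real.norm_eq_abs, abs_of_nonneg (sq_nonneg _)]
        have h1 : ‖Gn n x - G x‖ ≤ 2 := by
          calc ‖Gn n x - G x‖ ≤ ‖Gn n x‖ + ‖G x‖ := norm_sub_le _ _
            _ ≤ 2 := by rw [hGn1 n x hx]; linarith [hGle1 x]
        nlinarith [norm_nonneg (Gn n x - G x)])
      (by
        filter_upwards [hi] with x ⟨_, h2⟩
        have : Tendsto (fun n => Gn n x - G x) atTop (𝓝 0) := by
          simpa using h2.sub (tendsto_const_nhds (x := G x))
        have := (this.norm).pow 2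
        simpa using this)
    simpa using h
  -- (iii)
  have hiii : Tendsto (fun n => ∫ x in Ω, ‖dG n x - G x‖^2) atTop (𝓝 0) := by
    have hmono : ∀ n, ∫ x in Ω, ‖dG n x - G x‖^2
        ≤ 2 * (∫ x in Ω, ‖dG n x - Gn n x‖^2) + 2 * (∫ x in Ω, ‖Gn n x - G x‖^2) := by
      intro n
      have hle : ∫ x in Ω, ‖dG n x - G x‖^2
          ≤ ∫ x in Ω, (2*‖dG n x - Gn n x‖^2 + 2*‖Gn n x - G x‖^2) := by
        apply integral_mono_ae (hIa n) (((hIb n).const_mul 2).add ((hIc n).const_mul 2))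
        filter_upwards with x
        exact sq_tri (dG n x) (Gn n x) (G x)
      rw [integral_add ((hIb n).const_mul 2) ((hIc n).const_mul 2),
        integral_const_mul, integral_const_mul] at hle
      exact hle
    have h2bc : Tendsto (fun n => 2 * (∫ x in Ω, ‖dG n x - Gn n x‖^2)
        + 2 * (∫ x in Ω, ‖Gn n x - G x‖^2)) atTop (𝓝 0) := by
      have := (hGM.const_mul 2).add (hc.const_mul 2)
      simpa using this
    exact squeeze_zero (fun n => integral_nonneg (fun x => sq_nonneg _)) hmono h2bc
  -- (iv)
  have hiv : ∀ᵐ x ∂μ, ‖G x‖ = 1 := by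
    filter_upwards [hFne] with x h
    rw [hGdef]
    simp only [norm_smul, norm_inv, norm_norm]
    exact inv_mul_cancel₀ (norm_ne_zero_iff.mpr h)
  refine ⟨hi, hii, hiii, hiv, ?_⟩
  -- (v)
  intro φ hφ hφc hφs
  have hφ' : ContDiff ℝ ((⊤:ℕ∞) : WithTop ℕ∞) φ := hφ.of_le (by simp)
  obtain ⟨ψ, hψ, hψc, hψΩ, hψ1⟩ := exists_cutoff hφc hΩo hφs
  have hibp : ∀ n, ∫ x in Ω, φ x • dG n x = - ∫ x in Ω, ‖Fn n x‖ • gradient φ x :=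
    fun n => ibp_core Ω hΩo (Fn n) (hFnC n) (hFnne n) φ hφ' hφc hφs ψ hψ hψc hψΩ hψ1
  -- bound on φ
  obtain ⟨Cφ, hCφ⟩ := hφc.exists_bound_of_continuous hφ'.continuous
  have hCφ0 : 0 ≤ Cφ := le_trans (norm_nonneg _) (hCφ 0)
  -- gradient φ facts
  have hfderivφ : Continuous (fderiv ℝ φ) :=
    hφ'.continuous_fderiv (by simp : ((⊤:ℕ∞) : WithTop ℕ∞) ≠ 0)
  have hgradφcont : Continuous (fun x => gradient φ x) :=
    (InnerProductSpace.toDual ℝ E3).symm.continuous.comp hfderivφ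
  have hgradφzero : ∀ x ∉ tsupport φ, gradient φ x = 0 := by
    intro x hx
    have : fderiv ℝ φ x = 0 := by
      by_contra h
      exact hx (support_fderiv_subset ℝ (Function.mem_support.mpr h))
    show (InnerProductSpace.toDual ℝ E3).symm (fderiv ℝ φ x) = 0
    simp [this]
  have hgradφsupp : HasCompactSupport (fun x => gradient φ x) := by
    apply HasCompactSupport.of_support_subset_isCompact hφc
    intro x hx
    by_contra hxc
    exact hx (by simp [hgradφzero x hxc])
  -- RHS convergence
  have hRHS : Tendsto (fun n => ∫ x in Ω, ‖Fn n x‖ • gradient φ x) atTop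
      (𝓝 (∫ x in Ω, ‖F x‖ • gradient φ x)) := by
    apply tendsto_integral_of_dominated_convergence (μ := μ)
      (bound := fun x => M * ‖gradient φ x‖)
    · exact fun n => ((hFncont n).norm.smul hgradφcont).aestronglyMeasurable
    · exact ((hgradφcont.norm.integrable_of_hasCompactSupport
        hgradφsupp.norm).const_mul M).integrableOn
    · intro n
      filter_upwards [hmem] with x hx
      rw [norm_smul, Real.norm_eq_abs, abs_of_nonneg (norm_nonneg _)]
      exact mul_le_mul_of_nonneg_right (hFnbd n x hx) (norm_nonneg _)
    · filter_upwards [hi] with x ⟨h1, _⟩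
      exact h1.smul_const _
  -- LHS convergence
  have hIφdG : ∀ n, Integrable (fun x => φ x • dG n x) μ := by
    intro n
    obtain ⟨C, hC0, hC⟩ := hCn n
    apply Integrable.mono' (integrable_const (Cφ * C))
      ((hφ'.continuous.measurable.smul (hdGmeas n)).aestronglyMeasurable)
    filter_upwards [hmem] with x hx
    show ‖φ x • dG n x‖ ≤ Cφ * C
    rw [norm_smul]
    exact mul_le_mul (hCφ x) (hC x hx) (norm_nonneg _) hCφ0
  have hIφG : Integrable (fun x => φ x • G x) μ := by
    apply Integrable.mono' (integrable_const (Cφ * 1))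
      ((hφ'.continuous.measurable.smul hGmeas).aestronglyMeasurable)
    filter_upwards with x
    show ‖φ x • G x‖ ≤ Cφ * 1
    rw [norm_smul]
    exact mul_le_mul (hCφ x) (hGle1 x) (norm_nonneg _) hCφ0
  have hIdGG1 : ∀ n, Integrable (fun x => ‖dG n x - G x‖) μ := by
    intro n
    obtain ⟨C, hC0, hC⟩ := hCn n
    apply Integrable.mono' (integrable_const (C + 1))
      (((hdGmeas n).sub hGmeas).norm.aestronglyMeasurable)
    filter_upwards [hmem] with x hx
    rw [Real.norm_eq_abs, abs_of_nonneg (norm_nonneg _)]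
    calc ‖dG n x - G x‖ ≤ ‖dG n x‖ + ‖G x‖ := norm_sub_le _ _
      _ ≤ C + 1 := by linarith [hC x hx, hGle1 x]
  have hL1 : Tendsto (fun n => ∫ x in Ω, ‖dG n x - G x‖) atTop (𝓝 0) := by
    apply l2_to_l1 μ (fun n x => ‖dG n x - G x‖)
      (fun n => Filter.Eventually.of_forall (fun x => norm_nonneg _))
      (fun n => hIa n) hIdGG1 hiii
  have hLHS : Tendsto (fun n => ∫ x in Ω, φ x • dG n x) atTop
      (𝓝 (∫ x in Ω, φ x • G x)) := by
    rw [tendsto_iff_norm_sub_tendsto_zero]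
    apply squeeze_zero (fun n => norm_nonneg _)
      (g := fun n => Cφ * ∫ x in Ω, ‖dG n x - G x‖)
    · intro n
      have heq : (∫ x in Ω, φ x • dG n x) - (∫ x in Ω, φ x • G x)
          = ∫ x in Ω, (φ x • dG n x - φ x • G x) := (integral_sub (hIφdG n) hIφG).symm
      rw [heq]
      calc ‖∫ x in Ω, (φ x • dG n x - φ x • G x)‖
          ≤ ∫ x in Ω, ‖φ x • dG n x - φ x • G x‖ := norm_integral_le_integral_norm _
        _ ≤ ∫ x in Ω, Cφ * ‖dG n x - G x‖ := by
            apply integral_mono_ae (((hIφdG n).sub hIφG).norm) ((hIdGG1 n).const_mul Cφ)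
            filter_upwards with x
            simp only [Pi.sub_apply]
            rw [← smul_sub, norm_smul]
            exact mul_le_mul_of_nonneg_right (hCφ x) (norm_nonneg _)
        _ = Cφ * ∫ x in Ω, ‖dG n x - G x‖ := integral_const_mul _ _
    · simpa using hL1.const_mul Cφ
  have h1 : Tendsto (fun n => - ∫ x in Ω, ‖Fn n x‖ • gradient φ x) atTop
      (𝓝 (∫ x in Ω, φ x • G x)) := by
    have : (fun n => ∫ x in Ω, φ x • dG n x)
        = (fun n => - ∫ x in Ω, ‖Fn n x‖ • gradient φ x) := funext hibp
    rw [← this]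
    exact hLHS
  have h2 : Tendsto (fun n => - ∫ x in Ω, ‖Fn n x‖ • gradient φ x) atTop
      (𝓝 (- ∫ x in Ω, ‖F x‖ • gradient φ x)) := hRHS.neg
  exact tendsto_nhds_unique h1 h2
end

section
/- Let Ω ⊆ ℝ³ be an open convex set and let u : Ω → ℝ be differentiable at every point of Ω with u(x) ≥ 0 and ‖∇u(x)‖ ≤ 1 for all x ∈ Ω. Let Z := {x ∈ Ω : u(x) = 0} and assume Z is nonempty. If for every x ∈ Ω the pulled point x − u(x)∇u(x) belongs to Z, then u(x) = dist(x, Z) for every x ∈ Ω; that is, u is exactly the distance function to its own zero level set. -/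
/-- a nonnegative function with `‖∇u‖ ≤ 1` on an open convex set,
whose pulled points `x - u(x)∇u(x)` land in its zero level set, equals the
distance function to that zero level set. -/
theorem nsp_pulling_gives_distance
    (Ω : Set (EuclideanSpace ℝ (Fin 3))) (hΩo : IsOpen Ω) (hΩc : Convex ℝ Ω)
    (u : EuclideanSpace ℝ (Fin 3) → ℝ)
    (hdiff : ∀ x ∈ Ω, DifferentiableAt ℝ u x)
    (hnonneg : ∀ x ∈ Ω, 0 ≤ u x)
    (hgrad : ∀ x ∈ Ω, ‖gradient u x‖ ≤ 1)
    (hZne : {x ∈ Ω | u x = 0}.Nonempty)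
    (hpull : ∀ x ∈ Ω, x - u x • gradient u x ∈ {x ∈ Ω | u x = 0}) :
    ∀ x ∈ Ω, u x = Metric.infDist x {x ∈ Ω | u x = 0} := by
  intro x hx
  set Z := {x ∈ Ω | u x = 0} with hZ
  have hfderiv : ∀ y ∈ Ω, ‖fderiv ℝ u y‖ ≤ 1 := by
    intro y hy
    have : ‖gradient u y‖ = ‖fderiv ℝ u y‖ := by
      rw [gradient]
      exact (InnerProductSpace.toDual ℝ _).symm.norm_map _
    rw [← this]; exact hgrad y hy
  apply le_antisymm
  · -- u x ≤ infDist
    by_contra h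
    push_neg at h
    obtain ⟨z, ⟨hzΩ, hz0⟩, hlt⟩ := (Metric.infDist_lt_iff hZne).1 h
    have := hΩc.norm_image_sub_le_of_norm_fderiv_le hdiff hfderiv hzΩ hx
    rw [hz0, sub_zero, one_mul] at this
    have hle : u x ≤ dist x z := by
      calc u x ≤ |u x| := le_abs_self _
      _ = ‖u x‖ := rfl
      _ ≤ ‖x - z‖ := this
      _ = dist x z := (dist_eq_norm _ _).symm
    exact absurd hle hlt.not_ge
  · -- infDist ≤ u x
    have hmem := hpull x hx
    calc Metric.infDist x Z ≤ dist x (x - u x • gradient u x) :=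
          Metric.infDist_le_dist_of_mem hmem
    _ = ‖u x • gradient u x‖ := by rw [dist_eq_norm, sub_sub_cancel]
    _ = u x * ‖gradient u x‖ := by
          rw [norm_smul, Real.norm_eq_abs, abs_of_nonneg (hnonneg x hx)]
    _ ≤ u x * 1 := by
          exact mul_le_mul_of_nonneg_left (hgrad x hx) (hnonneg x hx)
    _ = u x := mul_one _
end

section
/- Let Ω ⊆ ℝ³ be an open convex set, let Γ ⊆ Ω be nonempty, and let F : Ω → ℝ³. Define u(x) := ‖F(x)‖ and assume: (i) u is differentiable at every point of Ω with ‖∇u(x)‖ ≤ 1 and F(x) = u(x)∇u(x) for all x ∈ Ω; (ii) u(x) = 0 for every x ∈ Γ; (iii) for every x ∈ Ω, the pulled point x − F(x) lies in Ω and u(x − F(x)) = 0. Then, setting Z := {x ∈ Ω : u(x) = 0}, the set Z contains Γ, and for every x ∈ Ω one has u(x) = dist(x, Z), the pulled point x − F(x) lies in Z, and ‖F(x)‖ = dist(x, Z). In other words, F is the exact shortest path to a set Z containing Γ: it maps each point x to the displacement from x to a nearest point of Z. -/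
/-- pointwise form of Theorem 2 of the paper — a vector field `F`
for which the manifold, gradient-matching and shortest-path losses vanish is the
exact shortest path to a set `Z` containing `Γ`. -/
theorem nsp_global_min_is_esp
    (Ω : Set (EuclideanSpace ℝ (Fin 3))) (hΩo : IsOpen Ω) (hΩc : Convex ℝ Ω)
    (Γ : Set (EuclideanSpace ℝ (Fin 3))) (hΓne : Γ.Nonempty) (hΓΩ : Γ ⊆ Ω)
    (F : EuclideanSpace ℝ (Fin 3) → EuclideanSpace ℝ (Fin 3))
    (hdiff : ∀ x ∈ Ω, DifferentiableAt ℝ (fun y => ‖F y‖) x)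
    (hgrad : ∀ x ∈ Ω, ‖gradient (fun y => ‖F y‖) x‖ ≤ 1)
    (hF : ∀ x ∈ Ω, F x = ‖F x‖ • gradient (fun y => ‖F y‖) x)
    (hΓ0 : ∀ x ∈ Γ, ‖F x‖ = 0)
    (hpull : ∀ x ∈ Ω, x - F x ∈ Ω ∧ ‖F (x - F x)‖ = 0) :
    Γ ⊆ {x ∈ Ω | ‖F x‖ = 0} ∧
    ∀ x ∈ Ω,
      ‖F x‖ = Metric.infDist x {x ∈ Ω | ‖F x‖ = 0} ∧
      x - F x ∈ {x ∈ Ω | ‖F x‖ = 0} ∧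
      ‖F x‖ = Metric.infDist x {x ∈ Ω | ‖F x‖ = 0} := by
  set u : EuclideanSpace ℝ (Fin 3) → ℝ := fun y => ‖F y‖ with hu
  set Z : Set (EuclideanSpace ℝ (Fin 3)) := {x ∈ Ω | ‖F x‖ = 0} with hZ
  -- 1-Lipschitz estimate on Ω
  have hlip : ∀ x ∈ Ω, ∀ z ∈ Ω, ‖u x - u z‖ ≤ ‖x - z‖ := by
    intro x hx z hz
    have := hΩc.norm_image_sub_le_of_norm_fderiv_le
      (fun y hy => hdiff y hy)
      (fun y hy => by
        have : ‖fderiv ℝ u y‖ = ‖gradient u y‖ := by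
          rw [gradient]
          exact ((InnerProductSpace.toDual ℝ _).symm.norm_map (fderiv ℝ u y)).symm
        rw [this]; exact hgrad y hy)
      hz hx
    simpa using this
  have key : ∀ x ∈ Ω, x - F x ∈ Z ∧ ‖F x‖ = Metric.infDist x Z := by
    intro x hx
    obtain ⟨hpΩ, hp0⟩ := hpull x hx
    have hmem : x - F x ∈ Z := ⟨hpΩ, hp0⟩
    refine ⟨hmem, le_antisymm ?_ ?_⟩
    · by_contra hcon
      push_neg at hcon
      obtain ⟨z, hz, hd⟩ := (Metric.infDist_lt_iff ⟨_, hmem⟩).1 hcon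
      have h := hlip x hx z hz.1
      rw [dist_eq_norm] at hd
      have : ‖F x‖ ≤ ‖x - z‖ := by
        calc ‖F x‖ = ‖u x - u z‖ := by rw [hu]; simp [hz.2]
          _ ≤ ‖x - z‖ := h
      linarith
    · have := Metric.infDist_le_dist_of_mem (x := x) hmem
      simpa [dist_eq_norm] using this
  refine ⟨fun x hx => ⟨hΓΩ hx, hΓ0 x hx⟩, fun x hx => ?_⟩
  obtain ⟨h1, h2⟩ := key x hx
  exact ⟨h2, h1, h2⟩
end
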